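/- arXiv:0707.2079 — 3 statements merged into one kernel-verified Lean document; each statement's English description precedes it below -/
import Mathlib

section
/- Let X₁,…,Xₙ be random variables taking values in [0,1] such that for each k, E[Xₖ | X₁,…,X_{k−1}] ≤ aₖ, and let μ = ∑ aᵢ. Then for any 0 < δ ≤ 1, P[∑ Xᵢ > (1+δ)μ] ≤ exp(−δ²μ/3). -/
/-!
Multiplicative Chernoff bound with conditional expectations. For `t ≥ 0`, convexity gives
`exp (t x) ≤ 1 + (eᵗ - 1) x` on `[0, 1]`. The factor `exp (t ∑_{i<k} Xᵢ)` is measurable for the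
σ-algebra generated by the `Xᵢ` with `i < k`, so it can be pulled out of the conditional expectation
of `X k`; this gives `E[exp (t ∑_{i≤k} Xᵢ)] ≤ (1 + (eᵗ - 1) aₖ) E[exp (t ∑_{i<k} Xᵢ)]`, and by induction
`E[exp (t ∑ Xᵢ)] ≤ exp ((eᵗ - 1) μ)`, as for independent Bernoulli variables. Markov's inequality at
`t = log (1 + δ)` and `δ - (1 + δ) log (1 + δ) ≤ -δ²/3` for `δ ∈ [0, 1]` finish.
-/

open MeasureTheory ProbabilityTheory Real

namespace Real

lemma exp_mul_le_one_add_mul (t : ℝ) {x : ℝ} (hx : x ∈ Set.Icc (0 : ℝ) 1) :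
    exp (t * x) ≤ 1 + (exp t - 1) * x := by
  have := convexOn_exp.2 (Set.mem_univ 0) (Set.mem_univ t) (sub_nonneg.2 hx.2) hx.1 (by ring)
  simp only [smul_eq_mul, mul_zero, zero_add, exp_zero, mul_one] at this
  calc exp (t * x) = exp (x * t) := by rw [mul_comm]
    _ ≤ 1 - x + x * exp t := this
    _ = 1 + (exp t - 1) * x := by ring

lemma sub_mul_log_one_add_le {δ : ℝ} (hδ0 : 0 ≤ δ) (hδ1 : δ ≤ 1) :
    δ - (1 + δ) * log (1 + δ) ≤ -(δ ^ 2 / 3) := by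
  have hlog : 2 * δ / (δ + 2) ≤ log (1 + δ) := le_log_one_add_of_nonneg hδ0
  have hrat : δ + δ ^ 2 / 3 ≤ (1 + δ) * (2 * δ / (δ + 2)) := by
    rw [mul_div_assoc', le_div_iff₀ (by linarith)]
    nlinarith [mul_nonneg (sq_nonneg δ) (sub_nonneg.2 hδ1)]
  nlinarith [mul_le_mul_of_nonneg_left hlog (by linarith : 0 ≤ 1 + δ)]

end Real

section CondExp

variable {Ω : Type*} {m m₀ : MeasurableSpace Ω} {μ : Measure Ω}

lemma integral_mul_le_of_condExp_le [IsFiniteMeasure μ] (hm : m ≤ m₀) {f g : Ω → ℝ} {c C : ℝ}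
    (hf : StronglyMeasurable[m] f) (hf0 : 0 ≤ f) (hfC : ∀ ω, f ω ≤ C) (hg : Integrable g μ)
    (hgc : μ[g | m] ≤ᵐ[μ] fun _ => c) :
    ∫ ω, f ω * g ω ∂μ ≤ c * ∫ ω, f ω ∂μ := by
  have hf_bdd : ∀ᵐ ω ∂μ, ‖f ω‖ ≤ C := .of_forall fun ω => by
    rw [Real.norm_of_nonneg (hf0 ω)]; exact hfC ω
  have hf_int : Integrable f μ :=
    .of_bound (hf.mono hm).aestronglyMeasurable C hf_bdd
  calc ∫ ω, f ω * g ω ∂μ = ∫ ω, (μ[f * g | m]) ω ∂μ := (integral_condExp hm).symm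
    _ = ∫ ω, f ω * (μ[g | m]) ω ∂μ :=
      integral_congr_ae (condExp_stronglyMeasurable_mul_of_bound hm hf hg C hf_bdd)
    _ ≤ ∫ ω, f ω * c ∂μ := by
      refine integral_mono_ae (integrable_condExp.bdd_mul (hf.mono hm).aestronglyMeasurable hf_bdd)
        (hf_int.mul_const c) ?_
      filter_upwards [hgc] with ω hω
      exact mul_le_mul_of_nonneg_left hω (hf0 ω)
    _ = c * ∫ ω, f ω ∂μ := by rw [integral_mul_const, mul_comm]

end CondExp

section StrictPast

variable {Ω ι β : Type*} [MeasurableSpace β]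

abbrev strictPast [Preorder ι] (X : ι → Ω → β) (k : ι) : MeasurableSpace Ω :=
  ⨆ i, ⨆ _ : i < k, MeasurableSpace.comap (X i) inferInstance

lemma strictPast_le [MeasurableSpace Ω] [Preorder ι] {X : ι → Ω → β}
    (hX : ∀ i, Measurable (X i)) (k : ι) :
    strictPast X k ≤ ‹MeasurableSpace Ω› :=
  iSup₂_le fun i _ => (hX i).comap_le

lemma measurable_strictPast [Preorder ι] (X : ι → Ω → β) {i k : ι} (hik : i < k) :
    Measurable[strictPast X k] (X i) :=
  measurable_iff_comap_le.2 (le_iSup₂_of_le i hik le_rfl)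

end StrictPast

section Mgf

variable {Ω : Type*} {m₀ : MeasurableSpace Ω} {μ : Measure Ω}

lemma integral_exp_mul_add_le_of_condExp_le [IsFiniteMeasure μ] {m : MeasurableSpace Ω}
    (hm : m ≤ m₀) {S Y : Ω → ℝ} {t c B : ℝ} (ht : 0 ≤ t) (hS : Measurable[m] S)
    (hSB : ∀ ω, S ω ≤ B) (hY : Measurable[m₀] Y) (hY01 : ∀ ω, Y ω ∈ Set.Icc (0 : ℝ) 1)
    (hYc : μ[Y | m] ≤ᵐ[μ] fun _ => c) :
    ∫ ω, exp (t * (Y ω + S ω)) ∂μ ≤ (1 + (exp t - 1) * c) * ∫ ω, exp (t * S ω) ∂μ := by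
  set f : Ω → ℝ := fun ω => exp (t * S ω)
  have hf : StronglyMeasurable[m] f := (measurable_exp.comp (hS.const_mul t)).stronglyMeasurable
  have hfB : ∀ ω, f ω ≤ exp (t * B) := fun ω => exp_le_exp.2 (mul_le_mul_of_nonneg_left (hSB ω) ht)
  have hf_int : Integrable f μ :=
    integrable_exp_mul_of_le t B ht (hS.mono hm le_rfl).aemeasurable (.of_forall hSB)
  have hY_int : Integrable Y μ := .of_mem_Icc 0 1 hY.aemeasurable (.of_forall hY01)
  have hfY_int : Integrable (fun ω => f ω * Y ω) μ :=
    hY_int.bdd_mul hf_int.aestronglyMeasurable (c := exp (t * B)) (.of_forall fun ω => by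
      rw [Real.norm_of_nonneg (exp_pos _).le]; exact hfB ω)
  have hpoint : ∀ ω, exp (t * (Y ω + S ω)) ≤ f ω + (exp t - 1) * (f ω * Y ω) := fun ω => by
    have hexp : exp (t * (Y ω + S ω)) = f ω * exp (t * Y ω) := by
      rw [← exp_add]; ring_nf
    rw [hexp]
    nlinarith [mul_le_mul_of_nonneg_left (exp_mul_le_one_add_mul t (hY01 ω)) (exp_pos (t * S ω)).le]
  calc ∫ ω, exp (t * (Y ω + S ω)) ∂μ
      ≤ ∫ ω, (f ω + (exp t - 1) * (f ω * Y ω)) ∂μ :=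
        integral_mono_of_nonneg (.of_forall fun ω => (exp_pos _).le)
          (hf_int.add (hfY_int.const_mul _)) (.of_forall hpoint)
    _ = ∫ ω, f ω ∂μ + (exp t - 1) * ∫ ω, f ω * Y ω ∂μ := by
        rw [integral_add hf_int (hfY_int.const_mul _), integral_const_mul]
    _ ≤ ∫ ω, f ω ∂μ + (exp t - 1) * (c * ∫ ω, f ω ∂μ) := by
        gcongr
        · linarith [add_one_le_exp t]
        · exact integral_mul_le_of_condExp_le hm hf (fun ω => (exp_pos _).le) hfB hY_int hYc
    _ = (1 + (exp t - 1) * c) * ∫ ω, exp (t * S ω) ∂μ := by ring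

variable {ι : Type*} [LinearOrder ι] {X : ι → Ω → ℝ} {a : ι → ℝ}

lemma integral_exp_mul_sum_le_prod [IsProbabilityMeasure μ] (hX : ∀ i, Measurable (X i))
    (hX01 : ∀ i ω, X i ω ∈ Set.Icc (0 : ℝ) 1) (ha : ∀ i, 0 ≤ a i)
    (hcond : ∀ k, μ[X k | strictPast X k] ≤ᵐ[μ] fun _ => a k) {t : ℝ} (ht : 0 ≤ t)
    (s : Finset ι) :
    ∫ ω, exp (t * ∑ i ∈ s, X i ω) ∂μ ≤ ∏ i ∈ s, (1 + (exp t - 1) * a i) := by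
  classical
  induction s using Finset.induction_on_max with
  | empty => simp
  | insert k s hlt ih =>
    have hks : k ∉ s := fun hk => lt_irrefl k (hlt k hk)
    have hS : Measurable[strictPast X k] fun ω => ∑ i ∈ s, X i ω :=
      Finset.measurable_sum s fun i hi => measurable_strictPast X (hlt i hi)
    have hSB : ∀ ω, ∑ i ∈ s, X i ω ≤ s.card := fun ω => by
      simpa using Finset.sum_le_sum fun i (_ : i ∈ s) => (hX01 i ω).2
    have hfactor : 0 ≤ 1 + (exp t - 1) * a k :=
      add_nonneg zero_le_one (mul_nonneg (by linarith [add_one_le_exp t]) (ha k))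
    simp only [Finset.sum_insert hks, Finset.prod_insert hks]
    calc ∫ ω, exp (t * (X k ω + ∑ i ∈ s, X i ω)) ∂μ
        ≤ (1 + (exp t - 1) * a k) * ∫ ω, exp (t * ∑ i ∈ s, X i ω) ∂μ :=
          integral_exp_mul_add_le_of_condExp_le (strictPast_le hX k) ht hS hSB (hX k) (hX01 k)
            (hcond k)
      _ ≤ (1 + (exp t - 1) * a k) * ∏ i ∈ s, (1 + (exp t - 1) * a i) := by gcongr

lemma mgf_sum_le_exp [Fintype ι] [IsProbabilityMeasure μ] (hX : ∀ i, Measurable (X i))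
    (hX01 : ∀ i ω, X i ω ∈ Set.Icc (0 : ℝ) 1) (ha : ∀ i, 0 ≤ a i)
    (hcond : ∀ k, μ[X k | strictPast X k] ≤ᵐ[μ] fun _ => a k) {t : ℝ} (ht : 0 ≤ t) :
    mgf (fun ω => ∑ i, X i ω) μ t ≤ exp ((exp t - 1) * ∑ i, a i) := by
  have hexp : 0 ≤ exp t - 1 := by linarith [add_one_le_exp t]
  calc mgf (fun ω => ∑ i, X i ω) μ t ≤ ∏ i, (1 + (exp t - 1) * a i) :=
        integral_exp_mul_sum_le_prod hX hX01 ha hcond ht Finset.univ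
    _ ≤ exp (∑ i, (exp t - 1) * a i) :=
        prod_one_add_le_exp_sum _ fun i => mul_nonneg hexp (ha i)
    _ = exp ((exp t - 1) * ∑ i, a i) := by rw [Finset.mul_sum]

end Mgf

lemma measure_one_add_mul_lt_le_of_mgf_le {Ω : Type*} [MeasurableSpace Ω] {μ : Measure Ω}
    [IsFiniteMeasure μ] {Y : Ω → ℝ} {A δ : ℝ} (hA : 0 ≤ A) (hδ0 : 0 ≤ δ) (hδ1 : δ ≤ 1)
    (hint : Integrable (fun ω => exp (log (1 + δ) * Y ω)) μ)
    (hmgf : mgf Y μ (log (1 + δ)) ≤ exp (δ * A)) :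
    μ {ω | (1 + δ) * A < Y ω} ≤ ENNReal.ofReal (exp (-(δ ^ 2 * A) / 3)) := by
  set t := log (1 + δ)
  have ht : 0 ≤ t := log_nonneg (by linarith)
  have hexponent : δ * A - t * ((1 + δ) * A) ≤ -(δ ^ 2 * A) / 3 := by
    nlinarith [mul_le_mul_of_nonneg_right (sub_mul_log_one_add_le hδ0 hδ1) hA]
  calc μ {ω | (1 + δ) * A < Y ω} ≤ μ {ω | (1 + δ) * A ≤ Y ω} :=
        measure_mono (Set.ofPred_subset_ofPred.2 fun _ => le_of_lt)
    _ = ENNReal.ofReal (μ.real {ω | (1 + δ) * A ≤ Y ω}) :=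
        (ofReal_measureReal (measure_ne_top _ _)).symm
    _ ≤ ENNReal.ofReal (exp (-(δ ^ 2 * A) / 3)) := by
      refine ENNReal.ofReal_le_ofReal ((measure_ge_le_exp_mul_mgf _ ht hint).trans ?_)
      calc exp (-t * ((1 + δ) * A)) * mgf Y μ t ≤ exp (-t * ((1 + δ) * A)) * exp (δ * A) := by
            gcongr
        _ = exp (δ * A - t * ((1 + δ) * A)) := by rw [← exp_add]; ring_nf
        _ ≤ exp (-(δ ^ 2 * A) / 3) := exp_le_exp.2 hexponent

/-- Supermartingale tail estimate: if `X₁,…,Xₙ` take values in `[0,1]` and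
`E[Xₖ | X₁,…,X_{k-1}] ≤ aₖ`, with `μ = ∑ aᵢ`, then for `0 < δ ≤ 1`,
`P[∑ Xᵢ > (1+δ)μ] ≤ exp(-δ²μ/3)`. -/
theorem supermartingale_tail {Ω : Type*} [MeasurableSpace Ω]
    (μ : Measure Ω) [IsProbabilityMeasure μ]
    (n : ℕ) (X : Fin n → Ω → ℝ) (a : Fin n → ℝ)
    (hmeas : ∀ i, Measurable (X i))
    (hrange : ∀ i ω, X i ω ∈ Set.Icc (0 : ℝ) 1)
    (ha : ∀ i, 0 ≤ a i)
    (hcond : ∀ k : Fin n,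
      μ[X k | ⨆ i : Fin n, ⨆ _ : i < k, MeasurableSpace.comap (X i) inferInstance]
        ≤ᵐ[μ] fun _ => a k)
    (δ : ℝ) (hδ0 : 0 < δ) (hδ1 : δ ≤ 1) :
    μ {ω | (1 + δ) * (∑ i, a i) < ∑ i, X i ω}
      ≤ ENNReal.ofReal (Real.exp (-(δ ^ 2 * (∑ i, a i)) / 3)) := by
  have ht : 0 ≤ log (1 + δ) := log_nonneg (by linarith)
  have hmgf := mgf_sum_le_exp hmeas hrange ha hcond ht
  rw [exp_log (by linarith), add_sub_cancel_left] at hmgf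
  refine measure_one_add_mul_lt_le_of_mgf_le (Finset.sum_nonneg fun i _ => ha i) hδ0.le hδ1
    ?_ hmgf
  refine integrable_exp_mul_of_le _ n ht (Finset.measurable_sum _ fun i _ => hmeas i).aemeasurable
    (.of_forall fun ω => ?_)
  simpa using Finset.sum_le_sum fun i (_ : i ∈ Finset.univ) => (hrange i ω).2
end

section
/- Let H be a bipartite graph with parts A of size d and B, such that every vertex of B has degree at least 2·s^{1/(t−1)}·d^{(t−2)/(t−1)} (where s ≥ t ≥ 3), and H contains no complete bipartite subgraph K_{s,t−1} with s vertices in A and t−1 vertices in B. Then H has at most 2td edges. -/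
/-! Suppose `H` has `e > 2td` edges and put `k = t - 1`. Counting pairs `(a, T)` with `T` a
`k`-set of neighbours of `a ∈ A`, freeness from `K_{s,k}` gives
`∑ₐ C(deg a, k) ≤ (s - 1) C(|B|, k)`. As `k! C(m, k) ≥ (m - k + 1)^k` (truncated subtraction),
the power mean inequality turns this into `(e - (k - 1) d)^k ≤ d^(k-1) (s - 1) |B|^k`, and the
left side is at least `(e / 2)^k`. On the other hand, summing the degree condition over `B` gives
`|B| · 2 s^(1/k) d^((k-1)/k) ≤ e`, i.e. `2^k s d^(k-1) |B|^k ≤ e^k`, which is incompatible with the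
first bound because `s - 1 < s`. -/

open Finset

theorem Real.rpow_div_natCast_pow {x : ℝ} (hx : 0 ≤ x) (a : ℝ) {n : ℕ} (hn : n ≠ 0) :
    (x ^ (a / n)) ^ n = x ^ a := by
  rw [← Real.rpow_natCast, ← Real.rpow_mul hx, div_mul_cancel₀ _ (by exact_mod_cast hn)]

section Bipartite

variable {A B : Type*} [Fintype A] [Fintype B] (r : A → B → Prop) [∀ a b, Decidable (r a b)]

theorem card_filter_rel_eq_sum_left : #{p : A × B | r p.1 p.2} = ∑ a, #{b | r a b} := by
  simp only [card_filter]
  rw [Fintype.sum_prod_type]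

theorem card_filter_rel_eq_sum_right : #{p : A × B | r p.1 p.2} = ∑ b, #{a | r a b} := by
  simp only [card_filter]
  rw [Fintype.sum_prod_type, sum_comm]

theorem card_mul_le_card_filter_rel {δ : ℝ} (hδ : ∀ b, δ ≤ #{a | r a b}) :
    Fintype.card B * δ ≤ #{p : A × B | r p.1 p.2} := by
  rw [card_filter_rel_eq_sum_right, ← nsmul_eq_mul, Nat.cast_sum]
  exact card_nsmul_le_sum _ _ _ fun b _ => hδ b

theorem sum_choose_card_filter_le_of_no_Kst {s k : ℕ}
    (hfree : ¬ ∃ (S : Finset A) (T : Finset B), #S = s ∧ #T = k ∧ ∀ a ∈ S, ∀ b ∈ T, r a b) :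
    ∑ a, (#{b | r a b}).choose k ≤ (s - 1) * (Fintype.card B).choose k := by
  have hcommon : ∀ T ∈ powersetCard k (univ : Finset B),
      #(univ.bipartiteBelow (fun a T => ∀ b ∈ T, r a b) T) ≤ s - 1 := by
    intro T hT
    by_contra! hlarge
    obtain ⟨S, hS, hScard⟩ := exists_subset_card_eq (Nat.le_of_pred_lt hlarge)
    exact hfree ⟨S, T, hScard, (mem_powersetCard.mp hT).2,
      fun a ha => ((mem_bipartiteBelow _).mp (hS ha)).2⟩
  calc ∑ a, (#{b | r a b}).choose k
      = ∑ a, #((powersetCard k univ).bipartiteAbove (fun a T => ∀ b ∈ T, r a b) a) := by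
        refine sum_congr rfl fun a _ => ?_
        rw [← card_powersetCard]
        congr 1
        ext T
        simp [mem_bipartiteAbove, subset_iff, and_comm]
    _ = ∑ T ∈ powersetCard k univ, #(univ.bipartiteBelow (fun a T => ∀ b ∈ T, r a b) T) :=
        sum_card_bipartiteAbove_eq_sum_card_bipartiteBelow _
    _ ≤ #(powersetCard k (univ : Finset B)) • (s - 1) := sum_le_card_nsmul _ _ _ hcommon
    _ = (s - 1) * (Fintype.card B).choose k := by
        rw [card_powersetCard, card_univ, smul_eq_mul, mul_comm]

theorem card_filter_rel_sub_le_sum_tsub (n : ℕ) :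
    #{p : A × B | r p.1 p.2} - n * Fintype.card A ≤ ∑ a, (#{b | r a b} - n) := by
  rw [card_filter_rel_eq_sum_left, tsub_le_iff_right, mul_comm, ← card_univ, ← smul_eq_mul,
    ← sum_const, ← sum_add_distrib]
  exact sum_le_sum fun a _ => le_tsub_add

theorem pow_card_filter_rel_sub_le_of_no_Kst {s n : ℕ}
    (hfree : ¬ ∃ (S : Finset A) (T : Finset B), #S = s ∧ #T = n + 1 ∧ ∀ a ∈ S, ∀ b ∈ T, r a b) :
    (#{p : A × B | r p.1 p.2} - n * Fintype.card A) ^ (n + 1) ≤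
      Fintype.card A ^ n * (s - 1) * Fintype.card B ^ (n + 1) := by
  calc (#{p : A × B | r p.1 p.2} - n * Fintype.card A) ^ (n + 1)
      ≤ (∑ a, (#{b | r a b} - n)) ^ (n + 1) := by
        gcongr
        exact card_filter_rel_sub_le_sum_tsub r n
    _ ≤ Fintype.card A ^ n * ∑ a, (#{b | r a b} - n) ^ (n + 1) :=
        pow_sum_le_card_mul_sum_pow (fun _ _ => Nat.zero_le _) n
    _ ≤ Fintype.card A ^ n * ∑ a, (n + 1).factorial * (#{b | r a b}).choose (n + 1) := by
        gcongr with a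
        rw [← Nat.descFactorial_eq_factorial_mul_choose]
        simpa using Nat.pow_sub_le_descFactorial #{b | r a b} (n + 1)
    _ ≤ Fintype.card A ^ n *
          ((n + 1).factorial * ((s - 1) * (Fintype.card B).choose (n + 1))) := by
        rw [← mul_sum]
        gcongr
        exact sum_choose_card_filter_le_of_no_Kst r hfree
    _ ≤ Fintype.card A ^ n * (s - 1) * Fintype.card B ^ (n + 1) := by
        rw [mul_left_comm (n + 1).factorial, ← Nat.descFactorial_eq_factorial_mul_choose,
          mul_assoc]
        gcongr
        exact Nat.descFactorial_le_pow _ _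

theorem pow_card_filter_rel_le_of_no_Kst {s n : ℕ}
    (hfree : ¬ ∃ (S : Finset A) (T : Finset B), #S = s ∧ #T = n + 1 ∧ ∀ a ∈ S, ∀ b ∈ T, r a b)
    (hmany : 2 * (n * Fintype.card A) ≤ #{p : A × B | r p.1 p.2}) :
    #{p : A × B | r p.1 p.2} ^ (n + 1) ≤
      2 ^ (n + 1) * Fintype.card A ^ n * (s - 1) * Fintype.card B ^ (n + 1) :=
  calc #{p : A × B | r p.1 p.2} ^ (n + 1)
      ≤ (2 * (#{p : A × B | r p.1 p.2} - n * Fintype.card A)) ^ (n + 1) := by gcongr; omega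
    _ ≤ 2 ^ (n + 1) * (Fintype.card A ^ n * (s - 1) * Fintype.card B ^ (n + 1)) := by
        rw [mul_pow]
        gcongr
        exact pow_card_filter_rel_sub_le_of_no_Kst r hfree
    _ = 2 ^ (n + 1) * Fintype.card A ^ n * (s - 1) * Fintype.card B ^ (n + 1) := by ring

theorem pow_mul_card_pow_le_pow_card_filter_rel {s d : ℝ} (hs : 0 ≤ s) (hd : 0 ≤ d) (n : ℕ)
    (hdeg : ∀ b, 2 * s ^ (1 / (n + 1 : ℝ)) * d ^ (n / (n + 1 : ℝ)) ≤ #{a | r a b}) :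
    2 ^ (n + 1) * d ^ n * s * Fintype.card B ^ (n + 1) ≤
      (#{p : A × B | r p.1 p.2} : ℝ) ^ (n + 1) := by
  have hroot (x a : ℝ) (hx : 0 ≤ x) : (x ^ (a / (n + 1 : ℝ))) ^ (n + 1) = x ^ a := by
    exact_mod_cast Real.rpow_div_natCast_pow hx a n.succ_ne_zero
  calc 2 ^ (n + 1) * d ^ n * s * Fintype.card B ^ (n + 1)
      = (Fintype.card B * (2 * s ^ (1 / (n + 1 : ℝ)) * d ^ (n / (n + 1 : ℝ)))) ^ (n + 1) := by
        rw [mul_pow, mul_pow, mul_pow, hroot _ _ hs, hroot _ _ hd, Real.rpow_one,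
          Real.rpow_natCast]
        ring
    _ ≤ (#{p : A × B | r p.1 p.2} : ℝ) ^ (n + 1) := by
        gcongr
        exact card_mul_le_card_filter_rel r hdeg

end Bipartite

/-- Let `H` be a bipartite graph with parts `A` of size `d` and `B`, given by
an incidence relation `r : A → B → Prop`, such that every vertex of `B` has
degree at least `2·s^{1/(t-1)}·d^{(t-2)/(t-1)}` (where `s ≥ t ≥ 3`), and `H`
contains no complete bipartite `K_{s,t-1}` with `s` vertices in `A` and `t-1`
vertices in `B`. Then `H` has at most `2td` edges. -/
theorem edges_le_of_no_Kst_minus {A B : Type*} [Fintype A] [Fintype B]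
    (r : A → B → Prop) [∀ a b, Decidable (r a b)]
    (s t d : ℕ) (hts : t ≤ s) (ht : 3 ≤ t) (hd : 1 ≤ d)
    (hA : Fintype.card A = d)
    (hdegB : ∀ b : B,
      2 * (s : ℝ) ^ ((1 : ℝ) / ((t : ℝ) - 1)) * (d : ℝ) ^ (((t : ℝ) - 2) / ((t : ℝ) - 1))
        ≤ (Finset.univ.filter (fun a : A => r a b)).card)
    (hfree : ¬ ∃ (S : Finset A) (T' : Finset B), S.card = s ∧ T'.card = t - 1 ∧
      ∀ a ∈ S, ∀ b ∈ T', r a b) :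
    (Finset.univ.filter (fun p : A × B => r p.1 p.2)).card ≤ 2 * t * d := by
  obtain ⟨n, rfl⟩ : ∃ n, t = n + 2 := ⟨t - 2, by omega⟩
  subst hA
  by_contra! hE
  have hupper := pow_card_filter_rel_le_of_no_Kst r (s := s) (n := n) (by simpa using hfree)
    (by nlinarith)
  have hexp : ((n + 2 : ℕ) : ℝ) - 1 = n + 1 ∧ ((n + 2 : ℕ) : ℝ) - 2 = n := by
    constructor <;> push_cast <;> ring
  simp only [hexp] at hdegB
  have hlower := pow_mul_card_pow_le_pow_card_filter_rel r (Nat.cast_nonneg s)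
    (Nat.cast_nonneg (Fintype.card A)) n hdegB
  norm_cast at hlower
  have hB : 0 < Fintype.card B := by
    obtain ⟨⟨_, b⟩, _⟩ := card_pos.mp (by omega : 0 < #{p : A × B | r p.1 p.2})
    exact Fintype.card_pos_iff.mpr ⟨b⟩
  have hlt : 2 ^ (n + 1) * Fintype.card A ^ n * (s - 1) * Fintype.card B ^ (n + 1) <
      2 ^ (n + 1) * Fintype.card A ^ n * s * Fintype.card B ^ (n + 1) := by
    gcongr
    omega
  exact (hlower.trans hupper).not_gt hlt
end

section
/- Let H be a bipartite graph with parts A of size d and B, with m > 2td edges, where every vertex of B has degree at least 2·s^{1/(t−1)}·d^{(t−2)/(t−1)}. Then the number of stars K_{1,t−1} with center in A and t−1 leaves in B is at least s·C(|B|, t−1), where C denotes the binomial coefficient. -/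
/-!
Write `k + 1 = t - 1` and `c = s^{1/(k+1)} d^{k/(k+1)}`, so that `c^{k+1} = s d^k`. Summing the
degrees over `B` gives `m ≥ 2 c |B|`. Since `m > 2td`, discarding `k` edges at every centre
still leaves `S = ∑_a (deg a - k) ≥ m / 2 ≥ c |B|` edges. The power mean inequality gives
`s |B|^{k+1} d^k ≤ S^{k+1} ≤ d^k ∑_a (deg a - k)^{k+1}`, and `(x - k)^{k+1} ≤ (k+1)! C(x, k+1)`
while `(k+1)! C(|B|, k+1) ≤ |B|^{k+1}`.
-/

open Finset

lemma card_filter_prod_eq_sum_card_filter {α β : Type*} [Fintype α] [Fintype β]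
    (r : α → β → Prop) [∀ a b, Decidable (r a b)] :
    #{p : α × β | r p.1 p.2} = ∑ a, #{b | r a b} := by
  simp only [card_filter, Fintype.sum_prod_type]

section
variable {ι : Type*} (s : Finset ι) (g : ι → ℕ) (k : ℕ)

lemma sum_le_sum_tsub_add_card_mul : ∑ i ∈ s, g i ≤ ∑ i ∈ s, (g i - k) + #s * k :=
  calc ∑ i ∈ s, g i ≤ ∑ i ∈ s, (g i - k + k) := sum_le_sum fun _ _ => le_tsub_add
    _ = ∑ i ∈ s, (g i - k) + #s * k := by rw [sum_add_distrib, sum_const, smul_eq_mul]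

lemma pow_sum_tsub_le_card_pow_mul_sum_descFactorial :
    (∑ i ∈ s, (g i - k)) ^ (k + 1) ≤ #s ^ k * ∑ i ∈ s, (g i).descFactorial (k + 1) :=
  (pow_sum_le_card_mul_sum_pow (fun _ _ => Nat.zero_le _) k).trans <|
    Nat.mul_le_mul_left _ <| sum_le_sum fun i _ => by
      simpa using (g i).pow_sub_le_descFactorial (k + 1)

variable {s g k} in
lemma mul_choose_le_sum_choose_of_mul_pow_le {c n : ℕ}
    (h : c * n ^ k ≤ ∑ i ∈ s, (g i).descFactorial k) :
    c * n.choose k ≤ ∑ i ∈ s, (g i).choose k := by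
  refine Nat.le_of_mul_le_mul_left ?_ k.factorial_pos
  calc k.factorial * (c * n.choose k) = c * n.descFactorial k := by
        rw [Nat.descFactorial_eq_factorial_mul_choose]; ring
    _ ≤ c * n ^ k := Nat.mul_le_mul_left _ (n.descFactorial_le_pow k)
    _ ≤ ∑ i ∈ s, (g i).descFactorial k := h
    _ = k.factorial * ∑ i ∈ s, (g i).choose k := by
        simp only [mul_sum, Nat.descFactorial_eq_factorial_mul_choose]

variable {s g k} in
lemma mul_choose_le_sum_choose_of_pow_le_pow_sum_tsub {c n : ℕ} (hs : s.Nonempty)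
    (h : c * n ^ (k + 1) * #s ^ k ≤ (∑ i ∈ s, (g i - k)) ^ (k + 1)) :
    c * n.choose (k + 1) ≤ ∑ i ∈ s, (g i).choose (k + 1) := by
  refine mul_choose_le_sum_choose_of_mul_pow_le <| Nat.le_of_mul_le_mul_right ?_ <|
    pow_pos hs.card_pos k
  exact (h.trans (pow_sum_tsub_le_card_pow_mul_sum_descFactorial s g k)).trans_eq (mul_comm _ _)

end

lemma rpow_one_div_mul_rpow_div_pow {x y : ℝ} (hx : 0 ≤ x) (hy : 0 ≤ y) (k : ℕ) :
    (x ^ (1 / (k + 1 : ℝ)) * y ^ ((k : ℝ) / (k + 1))) ^ (k + 1) = x * y ^ k := by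
  have hk : (k + 1 : ℝ) ≠ 0 := by positivity
  rw [mul_pow, ← Real.rpow_natCast, ← Real.rpow_natCast, ← Real.rpow_mul hx, ← Real.rpow_mul hy]
  push_cast
  rw [one_div_mul_cancel hk, div_mul_cancel₀ _ hk, Real.rpow_one, Real.rpow_natCast]

theorem stars_ge_of_many_edges_general {A B : Type*} [Fintype A] [Fintype B]
    (r : A → B → Prop) [∀ a b, Decidable (r a b)]
    (s t d : ℕ) (ht : 3 ≤ t) (hd : 1 ≤ d)
    (hA : Fintype.card A = d)
    (hdegB : ∀ b : B,
      2 * (s : ℝ) ^ ((1 : ℝ) / ((t : ℝ) - 1)) * (d : ℝ) ^ (((t : ℝ) - 2) / ((t : ℝ) - 1))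
        ≤ (Finset.univ.filter (fun a : A => r a b)).card)
    (hm : 2 * t * d < (Finset.univ.filter (fun p : A × B => r p.1 p.2)).card) :
    s * Nat.choose (Fintype.card B) (t - 1)
      ≤ ∑ a : A, Nat.choose (Finset.univ.filter (fun b : B => r a b)).card (t - 1) := by
  obtain ⟨k, rfl⟩ : ∃ k, t = k + 2 := ⟨t - 2, by omega⟩
  have hexp : ((k + 2 : ℕ) : ℝ) - 1 = k + 1 ∧ ((k + 2 : ℕ) : ℝ) - 2 = k := by
    push_cast; constructor <;> ring
  simp only [hexp] at hdegB
  set c : ℝ := (s : ℝ) ^ (1 / (k + 1 : ℝ)) * (d : ℝ) ^ ((k : ℝ) / (k + 1))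
  have hcB : 2 * (Fintype.card B * c) ≤ ∑ a, (#{b | r a b} : ℝ) :=
    calc 2 * (Fintype.card B * c) = ∑ _b : B, 2 * c := by
          rw [sum_const, Finset.card_univ, nsmul_eq_mul]; ring
      _ ≤ ∑ b, (#{a | r a b} : ℝ) := sum_le_sum fun b _ => by simpa only [mul_assoc] using hdegB b
      _ = ∑ a, (#{b | r a b} : ℝ) := by
          exact_mod_cast (sum_card_bipartiteAbove_eq_sum_card_bipartiteBelow r).symm
  have hAS : ∑ a, #{b | r a b} ≤ 2 * ∑ a, (#{b | r a b} - k) := by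
    have := sum_le_sum_tsub_add_card_mul univ (fun a => #{b | r a b}) k
    rw [Finset.card_univ, hA] at this
    rw [card_filter_prod_eq_sum_card_filter] at hm
    linarith
  have hcS : Fintype.card B * c ≤ ∑ a, (#{b | r a b} - k) := by
    have : (∑ a, #{b | r a b} : ℝ) ≤ 2 * ∑ a, (#{b | r a b} - k : ℕ) := by exact_mod_cast hAS
    linarith
  refine mul_choose_le_sum_choose_of_pow_le_pow_sum_tsub
    (univ_nonempty_iff.mpr (Fintype.card_pos_iff.mp (hA ▸ hd))) ?_
  rw [Finset.card_univ, hA]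
  have hc : c ^ (k + 1) = s * d ^ k := rpow_one_div_mul_rpow_div_pow (by positivity) (by positivity) k
  have := pow_le_pow_left₀ (by positivity) hcS (k + 1)
  rw [mul_pow, hc] at this
  rw [← Nat.cast_le (α := ℝ)]
  push_cast at this ⊢
  linarith

/-- Let `H` be a bipartite graph with parts `A` of size `d` and `B`, with
`m > 2td` edges, where every vertex of `B` has degree at least
`2·s^{1/(t-1)}·d^{(t-2)/(t-1)}` (with `s ≥ t ≥ 3`). Then the number of stars
`K_{1,t-1}` with center in `A` and `t-1` leaves in `B`, namely
`∑_{a∈A} C(deg(a), t-1)`, is at least `s·C(|B|, t-1)`. -/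
theorem stars_ge_of_many_edges {A B : Type*} [Fintype A] [Fintype B]
    (r : A → B → Prop) [∀ a b, Decidable (r a b)]
    (s t d : ℕ) (hts : t ≤ s) (ht : 3 ≤ t) (hd : 1 ≤ d)
    (hA : Fintype.card A = d)
    (hdegB : ∀ b : B,
      2 * (s : ℝ) ^ ((1 : ℝ) / ((t : ℝ) - 1)) * (d : ℝ) ^ (((t : ℝ) - 2) / ((t : ℝ) - 1))
        ≤ (Finset.univ.filter (fun a : A => r a b)).card)
    (hm : 2 * t * d < (Finset.univ.filter (fun p : A × B => r p.1 p.2)).card) :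
    s * Nat.choose (Fintype.card B) (t - 1)
      ≤ ∑ a : A, Nat.choose (Finset.univ.filter (fun b : B => r a b)).card (t - 1) :=
  stars_ge_of_many_edges_general r s t d ht hd hA hdegB hm
end
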